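/- arXiv:1804.00552 — 3 statements merged into one kernel-verified Lean document; each statement's English description precedes it below -/
import Mathlib

section
/- Fix d ∈ ℕ with d ≥ 1 and k₀ > 0, and let f : ℝ^d → ℂ be a Schwartz function. Define E : ℝ^d × (0, ∞) → ℂ by E(x, z) = ∫_{ℝ^d} (k₀ / (2 i π z))^{d/2} · exp( i k₀ |x − y|² / (2 z) ) · f(y) dy, where the complex power is taken with the principal branch. Then for every x ∈ ℝ^d and z > 0, E satisfies the homogeneous paraxial (Schrödinger) equation 2 i k₀ ∂E/∂z (x, z) + Δₓ E(x, z) = 0, where Δₓ denotes the Laplacian with respect to x. -/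
/-!
The Green's function `G(x, z; y) = (k₀/(2iπz))^{d/2} exp(i k₀ |x - y|²/(2z))` solves the paraxial
equation pointwise: `∂_z G` and `∂²_{x_i} G` are `G` times explicit polynomials in `x - y` whose
combination `2 i k₀ ∂_z G + Σ_i ∂²_{x_i} G` cancels identically. These factors grow at most
quadratically in `y`, locally uniformly in the parameter, so against the Schwartz function `f`
every derivative may be taken under the integral sign by dominated convergence.
-/

open MeasureTheory Complex SchwartzMap
open scoped Real BigOperators
open Filter Metric Topology

section SchwartzIntegrals

variable {D : Type*} [NormedAddCommGroup D] [NormedSpace ℝ D] [MeasurableSpace D] [BorelSpace D]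
  [SecondCountableTopology D] {μ : Measure D} [μ.HasTemperateGrowth]

theorem SchwartzMap.integrable_one_add_norm_pow_mul (f : 𝓢(D, ℂ)) (k : ℕ) :
    Integrable (fun y ↦ (1 + ‖y‖) ^ k * ‖f y‖) μ := by
  refine ((f.integrable.norm.add (f.integrable_pow_mul μ k)).const_mul (2 ^ (k - 1))).mono'
    ((continuous_const.add continuous_norm).pow k |>.mul f.continuous.norm).aestronglyMeasurable
    (Eventually.of_forall fun y ↦ ?_)
  rw [Real.norm_of_nonneg (by positivity)]
  calc (1 + ‖y‖) ^ k * ‖f y‖ ≤ 2 ^ (k - 1) * (1 ^ k + ‖y‖ ^ k) * ‖f y‖ := by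
        gcongr; exact add_pow_le zero_le_one (norm_nonneg y) k
    _ = 2 ^ (k - 1) * (‖f y‖ + ‖y‖ ^ k * ‖f y‖) := by ring

theorem SchwartzMap.integrable_mul_of_norm_le (f : 𝓢(D, ℂ)) {g : D → ℂ}
    (hg : AEStronglyMeasurable g μ) {C : ℝ} {k : ℕ}
    (hg_le : ∀ y, ‖g y‖ ≤ C * (1 + ‖y‖) ^ k) :
    Integrable (fun y ↦ g y * f y) μ :=
  ((f.integrable_one_add_norm_pow_mul k).const_mul C).mono'
    (hg.mul f.continuous.aestronglyMeasurable)
    (Eventually.of_forall fun y ↦ by rw [norm_mul, ← mul_assoc]; gcongr; exact hg_le y)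

theorem SchwartzMap.hasDerivAt_integral_mul (f : 𝓢(D, ℂ)) {F F' : ℝ → D → ℂ} {s : Set ℝ}
    {s₀ C : ℝ} {k : ℕ} (hs : s ∈ 𝓝 s₀) (hF_meas : ∀ t, AEStronglyMeasurable (F t) μ)
    (hF_int : Integrable (fun y ↦ F s₀ y * f y) μ) (hF'_meas : AEStronglyMeasurable (F' s₀) μ)
    (hF'_le : ∀ t ∈ s, ∀ y, ‖F' t y‖ ≤ C * (1 + ‖y‖) ^ k)
    (hF' : ∀ t ∈ s, ∀ y, HasDerivAt (F · y) (F' t y) t) :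
    Integrable (fun y ↦ F' s₀ y * f y) μ ∧
      HasDerivAt (fun t ↦ ∫ y, F t y * f y ∂μ) (∫ y, F' s₀ y * f y ∂μ) s₀ :=
  hasDerivAt_integral_of_dominated_loc_of_deriv_le hs
    (Eventually.of_forall fun t ↦ (hF_meas t).mul f.continuous.aestronglyMeasurable) hF_int
    (hF'_meas.mul f.continuous.aestronglyMeasurable)
    (Eventually.of_forall fun y t ht ↦ by
      rw [norm_mul, ← mul_assoc]; gcongr; exact hF'_le t ht y)
    ((f.integrable_one_add_norm_pow_mul k).const_mul C)
    (Eventually.of_forall fun y t ht ↦ (hF' t ht y).mul_const (f y))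

end SchwartzIntegrals

noncomputable section

def paraxialAmplitude (d : ℕ) (k₀ z : ℝ) : ℂ :=
  ((k₀ : ℂ) / (2 * I * (π : ℂ) * (z : ℂ))) ^ ((d : ℂ) / 2)

def paraxialPhase {ι : Type*} [Fintype ι] (k₀ z : ℝ) (x y : ι → ℝ) : ℂ :=
  Complex.exp (I * (k₀ : ℂ) * ((∑ i, (x i - y i) ^ 2 : ℝ) : ℂ) / (2 * (z : ℂ)))

def paraxialGreen (d : ℕ) (k₀ z : ℝ) (x y : Fin d → ℝ) : ℂ :=
  paraxialAmplitude d k₀ z * paraxialPhase k₀ z x y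

def paraxialField (d : ℕ) (k₀ : ℝ) (f : (Fin d → ℝ) → ℂ) (x : Fin d → ℝ) (z : ℝ) : ℂ :=
  ∫ y, paraxialGreen d k₀ z x y * f y

end

theorem hasDerivAt_paraxialAmplitude (d : ℕ) {k₀ z : ℝ} (hk : k₀ ≠ 0) (hz : z ≠ 0) :
    HasDerivAt (paraxialAmplitude d k₀) (-(d : ℂ) / (2 * z) * paraxialAmplitude d k₀ z) z := by
  have hz' : (z : ℂ) ≠ 0 := ofReal_ne_zero.2 hz
  have hk' : (k₀ : ℂ) ≠ 0 := ofReal_ne_zero.2 hk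
  -- the base is purely imaginary, so it stays off the branch cut of the principal power
  have hbase : (k₀ : ℂ) / (2 * I * π * z) = -I * ((k₀ / (2 * π * z) : ℝ) : ℂ) := by
    push_cast
    field_simp
    ring_nf
    simp [I_sq]
  have hslit : (k₀ : ℂ) / (2 * I * π * z) ∈ slitPlane := by
    rw [hbase, mem_slitPlane_iff]
    right
    simp only [neg_mul, neg_im, mul_im, I_re, ofReal_im, mul_zero, I_im, ofReal_re, one_mul,
      zero_add, neg_ne_zero]
    exact div_ne_zero hk (mul_ne_zero (mul_ne_zero two_ne_zero Real.pi_ne_zero) hz)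
  have hinv : HasDerivAt (fun w : ℂ ↦ (k₀ : ℂ) / (2 * I * π * w))
      (-((k₀ : ℂ) / (2 * I * π * z)) / z) z := by
    refine (((hasDerivAt_inv hz').const_mul ((k₀ : ℂ) / (2 * I * π))).congr_deriv (by ring))
      |>.congr_of_eventuallyEq (Eventually.of_forall fun w ↦ ?_)
    ring
  have h := (hinv.cpow_const (c := (d : ℂ) / 2) hslit).comp_ofReal
  rw [cpow_sub _ _ (slitPlane_ne_zero hslit), cpow_one] at h
  refine h.congr_deriv ?_
  rw [paraxialAmplitude]
  field_simp

section Phase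

variable {ι : Type*} [Fintype ι] {k₀ z : ℝ}

theorem norm_paraxialPhase (x y : ι → ℝ) : ‖paraxialPhase k₀ z x y‖ = 1 := by
  have h : I * k₀ * ((∑ i, (x i - y i) ^ 2 : ℝ) : ℂ) / (2 * z) =
      ((k₀ * (∑ i, (x i - y i) ^ 2) / (2 * z) : ℝ) : ℂ) * I := by
    push_cast; ring
  rw [paraxialPhase, h, norm_exp_ofReal_mul_I]

theorem continuous_paraxialPhase (x : ι → ℝ) : Continuous (paraxialPhase k₀ z x) := by
  unfold paraxialPhase
  fun_prop

theorem hasDerivAt_paraxialPhase_distance (x y : ι → ℝ) (hz : z ≠ 0) :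
    HasDerivAt (fun s ↦ paraxialPhase k₀ s x y)
      (-(I * k₀ * ((∑ i, (x i - y i) ^ 2 : ℝ) : ℂ)) / (2 * z ^ 2) * paraxialPhase k₀ z x y)
      z := by
  have hz' : (z : ℂ) ≠ 0 := ofReal_ne_zero.2 hz
  have h := (((hasDerivAt_inv hz').comp_ofReal).const_mul
    (I * k₀ * ((∑ i, (x i - y i) ^ 2 : ℝ) : ℂ) / 2)).cexp
  refine (h.congr_deriv ?_).congr_of_eventuallyEq (Eventually.of_forall fun s ↦ ?_)
  · rw [paraxialPhase]; field_simp
  · simp only [paraxialPhase]; congr 1; ring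

theorem sum_sq_update_sub [DecidableEq ι] (x y : ι → ℝ) (i : ι) (t : ℝ) :
    ∑ j, (Function.update x i t j - y j) ^ 2 =
      (t - y i) ^ 2 + ∑ j ∈ Finset.univ.erase i, (x j - y j) ^ 2 := by
  rw [← Finset.add_sum_erase _ _ (Finset.mem_univ i), Function.update_self]
  congr 1
  exact Finset.sum_congr rfl fun j hj ↦ by rw [Function.update_of_ne (Finset.ne_of_mem_erase hj)]

theorem hasDerivAt_paraxialPhase_update [DecidableEq ι] (x y : ι → ℝ) (i : ι) (t : ℝ) :
    HasDerivAt (fun t ↦ paraxialPhase k₀ z (Function.update x i t) y)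
      (I * k₀ / z * (t - y i) * paraxialPhase k₀ z (Function.update x i t) y) t := by
  have hsq :
      HasDerivAt (fun t ↦ ∑ j, (Function.update x i t j - y j) ^ 2) (2 * (t - y i)) t := by
    simp_rw [sum_sq_update_sub]
    simpa using (((hasDerivAt_id t).sub_const (y i)).pow 2).add_const
      (∑ j ∈ Finset.univ.erase i, (x j - y j) ^ 2)
  have h := ((hsq.ofReal_comp.const_mul (I * k₀)).div_const (2 * z)).cexp
  refine h.congr_deriv ?_
  rw [paraxialPhase]
  push_cast
  ring

end Phase

section ElementaryBounds

theorem ne_zero_of_mem_closedBall_abs_div_two {z s : ℝ} (hz : z ≠ 0)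
    (hs : s ∈ closedBall z (|z| / 2)) : s ≠ 0 := by
  rintro rfl
  rw [mem_closedBall, dist_zero_left, Real.norm_eq_abs] at hs
  linarith [abs_pos.2 hz]

theorem one_add_abs_le_of_mem_ball {t t₀ : ℝ} (ht : t ∈ ball t₀ 1) : 1 + |t| ≤ 2 + |t₀| := by
  rw [mem_ball, Real.dist_eq] at ht
  linarith [abs_sub_abs_le_abs_sub t t₀]

variable {ι : Type*} [Fintype ι]

theorem abs_sub_apply_le (t : ℝ) (y : ι → ℝ) (i : ι) : |t - y i| ≤ (1 + |t|) * (1 + ‖y‖) := by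
  have hy : |y i| ≤ ‖y‖ := by simpa using norm_le_pi_norm y i
  calc |t - y i| ≤ |t| + |y i| := abs_sub _ _
    _ ≤ (1 + |t|) * (1 + ‖y‖) := by nlinarith [abs_nonneg t, norm_nonneg y]

theorem one_add_sum_sq_sub_le (x y : ι → ℝ) :
    1 + ∑ i, (x i - y i) ^ 2 ≤ (1 + Fintype.card ι * (1 + ‖x‖) ^ 2) * (1 + ‖y‖) ^ 2 := by
  have hterm : ∀ i, (x i - y i) ^ 2 ≤ ((1 + ‖x‖) * (1 + ‖y‖)) ^ 2 := fun i ↦ by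
    have hx : |x i| ≤ ‖x‖ := by simpa using norm_le_pi_norm x i
    rw [← sq_abs]
    gcongr
    exact (abs_sub_apply_le (x i) y i).trans (by gcongr)
  have hsum := Finset.sum_le_sum fun i (_ : i ∈ Finset.univ) ↦ hterm i
  rw [Finset.sum_const, Finset.card_univ, nsmul_eq_mul] at hsum
  nlinarith [one_le_pow₀ (n := 2) (le_add_of_nonneg_right (norm_nonneg y) : (1 : ℝ) ≤ 1 + ‖y‖)]

end ElementaryBounds

section Green

variable {d : ℕ} {k₀ z : ℝ}

theorem norm_paraxialGreen (x y : Fin d → ℝ) :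
    ‖paraxialGreen d k₀ z x y‖ = ‖paraxialAmplitude d k₀ z‖ := by
  rw [paraxialGreen, norm_mul, norm_paraxialPhase, mul_one]

@[fun_prop]
theorem continuous_paraxialGreen (x : Fin d → ℝ) : Continuous (paraxialGreen d k₀ z x) :=
  continuous_const.mul (continuous_paraxialPhase x)

theorem hasDerivAt_paraxialGreen_distance (hk : k₀ ≠ 0) (hz : z ≠ 0) (x y : Fin d → ℝ) :
    HasDerivAt (fun s ↦ paraxialGreen d k₀ s x y)
      ((-(d : ℂ) / (2 * z) - I * k₀ * ((∑ i, (x i - y i) ^ 2 : ℝ) : ℂ) / (2 * z ^ 2)) *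
        paraxialGreen d k₀ z x y) z :=
  ((hasDerivAt_paraxialAmplitude d hk hz).mul
    (hasDerivAt_paraxialPhase_distance x y hz)).congr_deriv (by rw [paraxialGreen]; ring)

theorem hasDerivAt_paraxialGreen_update (x y : Fin d → ℝ) (i : Fin d) (t : ℝ) :
    HasDerivAt (fun t ↦ paraxialGreen d k₀ z (Function.update x i t) y)
      (I * k₀ / z * (t - y i) * paraxialGreen d k₀ z (Function.update x i t) y) t :=
  ((hasDerivAt_paraxialPhase_update x y i t).const_mul _).congr_deriv
    (by rw [paraxialGreen]; ring)

theorem hasDerivAt_mul_paraxialGreen_update (x y : Fin d → ℝ) (i : Fin d) (t : ℝ) :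
    HasDerivAt
      (fun t ↦ I * k₀ / z * (t - y i) * paraxialGreen d k₀ z (Function.update x i t) y)
      ((I * k₀ / z + (I * k₀ / z * (t - y i)) ^ 2) *
        paraxialGreen d k₀ z (Function.update x i t) y) t := by
  have hlin : HasDerivAt (fun t : ℝ ↦ I * k₀ / z * (t - y i)) (I * k₀ / z) t := by
    simpa using ((hasDerivAt_id t).ofReal_comp.sub_const (y i : ℂ)).const_mul (I * k₀ / z)
  exact (hlin.mul (hasDerivAt_paraxialGreen_update x y i t)).congr_deriv (by ring)

/-- Read through `hasDerivAt_paraxialGreen_distance` and `hasDerivAt_mul_paraxialGreen_update`,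
this says that `paraxialGreen` solves the paraxial equation `2 i k₀ ∂_z G + Δₓ G = 0`. -/
theorem paraxialGreen_coeff_identity (x y : Fin d → ℝ) :
    2 * I * k₀ * ((-(d : ℂ) / (2 * z) - I * k₀ * ((∑ i, (x i - y i) ^ 2 : ℝ) : ℂ) /
        (2 * z ^ 2)) * paraxialGreen d k₀ z x y) +
      ∑ i, (I * k₀ / z + (I * k₀ / z * (x i - y i)) ^ 2) * paraxialGreen d k₀ z x y = 0 := by
  rw [← Finset.sum_mul, Finset.sum_add_distrib]
  simp only [mul_pow, ← Finset.mul_sum, Finset.sum_const, Finset.card_univ, Fintype.card_fin,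
    nsmul_eq_mul]
  push_cast
  ring

end Green

section Field

variable {d : ℕ} {k₀ z : ℝ}

theorem exists_norm_deriv_paraxialGreen_distance_le (hk : k₀ ≠ 0) (hz : z ≠ 0)
    (x : Fin d → ℝ) :
    ∃ C, ∀ s ∈ ball z (|z| / 2), ∀ y,
      ‖(-(d : ℂ) / (2 * s) - I * k₀ * ((∑ i, (x i - y i) ^ 2 : ℝ) : ℂ) / (2 * s ^ 2)) *
        paraxialGreen d k₀ s x y‖ ≤ C * (1 + ‖y‖) ^ 2 := by
  obtain ⟨A, hA⟩ := (isCompact_closedBall z (|z| / 2)).exists_bound_of_continuousOn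
    (f := fun s : ℝ ↦
      (‖(d : ℂ) / (2 * s)‖ + ‖I * k₀ / (2 * s ^ 2)‖) * ‖paraxialAmplitude d k₀ s‖)
    (by
      have hne : ∀ s ∈ closedBall z (|z| / 2), s ≠ 0 := fun s ↦
        ne_zero_of_mem_closedBall_abs_div_two hz
      have hamp : ContinuousOn (paraxialAmplitude d k₀) (closedBall z (|z| / 2)) := fun s hs ↦
        (hasDerivAt_paraxialAmplitude d hk (hne s hs)).continuousAt.continuousWithinAt
      fun_prop (disch := simp_all))
  refine ⟨A * (1 + d * (1 + ‖x‖) ^ 2), fun s hs y ↦ ?_⟩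
  set R := ∑ i, (x i - y i) ^ 2
  have hR : 0 ≤ R := by positivity
  have hAs := (Real.le_norm_self _).trans (hA s (ball_subset_closedBall hs))
  have hA0 : 0 ≤ A := (norm_nonneg _).trans (hA s (ball_subset_closedBall hs))
  calc _ = ‖-(d : ℂ) / (2 * s) - I * k₀ / (2 * s ^ 2) * R‖ * ‖paraxialAmplitude d k₀ s‖ := by
        rw [norm_mul, norm_paraxialGreen, mul_div_right_comm]
    _ ≤ (‖(d : ℂ) / (2 * s)‖ + ‖I * k₀ / (2 * s ^ 2)‖ * R) * ‖paraxialAmplitude d k₀ s‖ := by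
        gcongr
        refine (norm_sub_le _ _).trans_eq ?_
        rw [norm_mul, neg_div, norm_neg, norm_real, Real.norm_of_nonneg hR]
    _ ≤ (‖(d : ℂ) / (2 * s)‖ + ‖I * k₀ / (2 * s ^ 2)‖) * ‖paraxialAmplitude d k₀ s‖ *
          (1 + R) := by
        have hm := norm_nonneg (paraxialAmplitude d k₀ s)
        nlinarith [mul_nonneg (mul_nonneg (norm_nonneg ((d : ℂ) / (2 * s))) hR) hm,
          mul_nonneg (norm_nonneg (I * k₀ / (2 * s ^ 2))) hm]
    _ ≤ A * ((1 + d * (1 + ‖x‖) ^ 2) * (1 + ‖y‖) ^ 2) := by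
        gcongr
        simpa using one_add_sum_sq_sub_le x y
    _ = _ := by ring

theorem hasDerivAt_paraxialField_distance (f : 𝓢(Fin d → ℝ, ℂ)) (hk : k₀ ≠ 0) (x : Fin d → ℝ)
    (hz : z ≠ 0) :
    Integrable (fun y ↦ (-(d : ℂ) / (2 * z) - I * k₀ * ((∑ i, (x i - y i) ^ 2 : ℝ) : ℂ) /
        (2 * z ^ 2)) * paraxialGreen d k₀ z x y * f y) ∧
      HasDerivAt (paraxialField d k₀ f x)
        (∫ y, (-(d : ℂ) / (2 * z) - I * k₀ * ((∑ i, (x i - y i) ^ 2 : ℝ) : ℂ) /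
          (2 * z ^ 2)) * paraxialGreen d k₀ z x y * f y) z := by
  obtain ⟨C, hC⟩ := exists_norm_deriv_paraxialGreen_distance_le hk hz x
  refine f.hasDerivAt_integral_mul (ball_mem_nhds z (by positivity)) (fun s ↦ by fun_prop)
    (f.integrable_mul_of_norm_le (by fun_prop) (C := ‖paraxialAmplitude d k₀ z‖) (k := 0)
      fun y ↦ by simp [norm_paraxialGreen]) (by fun_prop) hC
    fun s hs y ↦ hasDerivAt_paraxialGreen_distance hk
      (ne_zero_of_mem_closedBall_abs_div_two hz (ball_subset_closedBall hs)) x y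

theorem hasDerivAt_paraxialField_update (f : 𝓢(Fin d → ℝ, ℂ)) (x : Fin d → ℝ) (i : Fin d)
    (t₀ : ℝ) :
    Integrable (fun y ↦ I * k₀ / z * (t₀ - y i) *
        paraxialGreen d k₀ z (Function.update x i t₀) y * f y) ∧
      HasDerivAt (fun t ↦ paraxialField d k₀ f (Function.update x i t) z)
        (∫ y, I * k₀ / z * (t₀ - y i) *
          paraxialGreen d k₀ z (Function.update x i t₀) y * f y) t₀ := by
  refine f.hasDerivAt_integral_mul (ball_mem_nhds t₀ one_pos) (fun t ↦ by fun_prop)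
    (f.integrable_mul_of_norm_le (by fun_prop) (C := ‖paraxialAmplitude d k₀ z‖) (k := 0)
      fun y ↦ by simp [norm_paraxialGreen]) (by fun_prop)
    (C := ‖I * k₀ / z‖ * ‖paraxialAmplitude d k₀ z‖ * (2 + |t₀|)) (k := 1) (fun t ht y ↦ ?_)
    fun t _ y ↦ hasDerivAt_paraxialGreen_update x y i t
  have ht := one_add_abs_le_of_mem_ball ht
  rw [norm_mul, norm_mul, norm_paraxialGreen, ← ofReal_sub, norm_real, Real.norm_eq_abs,
    pow_one]
  calc _ ≤ ‖I * k₀ / z‖ * ((1 + |t|) * (1 + ‖y‖)) * ‖paraxialAmplitude d k₀ z‖ := by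
        gcongr; exact abs_sub_apply_le t y i
    _ ≤ ‖I * k₀ / z‖ * ((2 + |t₀|) * (1 + ‖y‖)) * ‖paraxialAmplitude d k₀ z‖ := by
        gcongr
    _ = _ := by ring

theorem hasDerivAt_integral_mul_paraxialGreen_update (f : 𝓢(Fin d → ℝ, ℂ)) (x : Fin d → ℝ)
    (i : Fin d) (t₀ : ℝ) :
    Integrable (fun y ↦ (I * k₀ / z + (I * k₀ / z * (t₀ - y i)) ^ 2) *
        paraxialGreen d k₀ z (Function.update x i t₀) y * f y) ∧
      HasDerivAt (fun t ↦ ∫ y, I * k₀ / z * (t - y i) *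
          paraxialGreen d k₀ z (Function.update x i t) y * f y)
        (∫ y, (I * k₀ / z + (I * k₀ / z * (t₀ - y i)) ^ 2) *
          paraxialGreen d k₀ z (Function.update x i t₀) y * f y) t₀ := by
  refine f.hasDerivAt_integral_mul (ball_mem_nhds t₀ one_pos) (fun t ↦ by fun_prop)
    (hasDerivAt_paraxialField_update f x i t₀).1 (by fun_prop)
    (C := (‖I * k₀ / z‖ + ‖I * k₀ / z‖ ^ 2 * (2 + |t₀|) ^ 2) * ‖paraxialAmplitude d k₀ z‖)
    (k := 2)
    (fun t ht y ↦ ?_) fun t _ y ↦ hasDerivAt_mul_paraxialGreen_update x y i t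
  have ht := one_add_abs_le_of_mem_ball ht
  have hy : 1 ≤ (1 + ‖y‖) ^ 2 := one_le_pow₀ (le_add_of_nonneg_right (norm_nonneg y))
  have hlin : ‖I * k₀ / z * (t - y i)‖ ≤ ‖I * k₀ / z‖ * ((2 + |t₀|) * (1 + ‖y‖)) := by
    rw [norm_mul, ← ofReal_sub, norm_real, Real.norm_eq_abs]
    gcongr
    exact (abs_sub_apply_le t y i).trans (by gcongr)
  rw [norm_mul, norm_paraxialGreen]
  calc _ ≤ (‖I * k₀ / z‖ + (‖I * k₀ / z‖ * ((2 + |t₀|) * (1 + ‖y‖))) ^ 2) *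
        ‖paraxialAmplitude d k₀ z‖ := by
        gcongr
        exact (norm_add_le _ _).trans (by rw [norm_pow]; gcongr)
    _ ≤ _ := by
        rw [mul_right_comm]
        gcongr
        nlinarith [norm_nonneg (I * k₀ / z)]

theorem iteratedDeriv_two_paraxialField_update (f : 𝓢(Fin d → ℝ, ℂ)) (x : Fin d → ℝ)
    (i : Fin d) :
    Integrable (fun y ↦ (I * k₀ / z + (I * k₀ / z * (x i - y i)) ^ 2) *
        paraxialGreen d k₀ z x y * f y) ∧
      iteratedDeriv 2 (fun t ↦ paraxialField d k₀ f (Function.update x i t) z) (x i) =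
        ∫ y, (I * k₀ / z + (I * k₀ / z * (x i - y i)) ^ 2) * paraxialGreen d k₀ z x y * f y := by
  have hderiv : deriv (fun t ↦ paraxialField d k₀ f (Function.update x i t) z) =
      fun t ↦ ∫ y, I * k₀ / z * (t - y i) *
        paraxialGreen d k₀ z (Function.update x i t) y * f y :=
    funext fun t ↦ (hasDerivAt_paraxialField_update f x i t).2.deriv
  obtain ⟨hint, hderiv₂⟩ :=
    hasDerivAt_integral_mul_paraxialGreen_update (k₀ := k₀) (z := z) f x i (x i)
  rw [Function.update_eq_self] at hint hderiv₂
  exact ⟨hint, by rw [iteratedDeriv_succ, iteratedDeriv_one, hderiv, hderiv₂.deriv]⟩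

end Field

theorem paraxial_propagated_field_solves_equation_general
    (d : ℕ) (k₀ : ℝ) (hk : 0 < k₀)
    (f : SchwartzMap ((Fin d) → ℝ) ℂ)
    (E : ((Fin d) → ℝ) → ℝ → ℂ)
    (hE : ∀ (x : Fin d → ℝ) (z : ℝ), E x z =
      ∫ y : Fin d → ℝ,
        ((k₀ : ℂ) / (2 * Complex.I * (π : ℂ) * (z : ℂ))) ^ ((d : ℂ) / 2) *
          Complex.exp (Complex.I * (k₀ : ℂ) * ((∑ i, (x i - y i) ^ 2 : ℝ) : ℂ) /
            (2 * (z : ℂ))) * f y) :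
    ∀ (x : Fin d → ℝ) (z : ℝ), 0 < z →
      2 * Complex.I * (k₀ : ℂ) * deriv (fun s : ℝ => E x s) z +
        (∑ i, iteratedDeriv 2 (fun t : ℝ => E (Function.update x i t) z) (x i)) = 0 := by
  intro x z hz
  obtain rfl : E = paraxialField d k₀ f := funext₂ hE
  obtain ⟨hint_z, hderiv_z⟩ := hasDerivAt_paraxialField_distance f hk.ne' x hz.ne'
  have hxx := iteratedDeriv_two_paraxialField_update (k₀ := k₀) (z := z) f x
  rw [hderiv_z.deriv, Finset.sum_congr rfl fun i _ ↦ (hxx i).2, ← integral_const_mul,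
    ← integral_finsetSum _ fun i _ ↦ (hxx i).1,
    ← integral_add (hint_z.const_mul _) (integrable_finsetSum _ fun i _ ↦ (hxx i).1)]
  refine (integral_congr_ae (ae_of_all _ fun y ↦ ?_)).trans (integral_zero _ _)
  rw [← Finset.sum_mul]
  linear_combination f y * paraxialGreen_coeff_identity (k₀ := k₀) (z := z) x y

/-- The field obtained by propagating a Schwartz initial field `f` with the free-space
paraxial Green's function,
`E(x,z) = ∫ (k₀/(2iπz))^{d/2} exp(i k₀ |x−y|²/(2z)) f(y) dy`,
satisfies the homogeneous paraxial (Schrödinger) equation `2 i k₀ ∂E/∂z + Δₓ E = 0`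
for `z > 0`. -/
theorem paraxial_propagated_field_solves_equation
    (d : ℕ) (hd : 1 ≤ d) (k₀ : ℝ) (hk : 0 < k₀)
    (f : SchwartzMap ((Fin d) → ℝ) ℂ)
    (E : ((Fin d) → ℝ) → ℝ → ℂ)
    (hE : ∀ (x : Fin d → ℝ) (z : ℝ), E x z =
      ∫ y : Fin d → ℝ,
        ((k₀ : ℂ) / (2 * Complex.I * (π : ℂ) * (z : ℂ))) ^ ((d : ℂ) / 2) *
          Complex.exp (Complex.I * (k₀ : ℂ) * ((∑ i, (x i - y i) ^ 2 : ℝ) : ℂ) /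
            (2 * (z : ℂ))) * f y) :
    ∀ (x : Fin d → ℝ) (z : ℝ), 0 < z →
      2 * Complex.I * (k₀ : ℂ) * deriv (fun s : ℝ => E x s) z +
        (∑ i, iteratedDeriv 2 (fun t : ℝ => E (Function.update x i t) z) (x i)) = 0 :=
  paraxial_propagated_field_solves_equation_general d k₀ hk f E hE
end

section
/- Fix d ∈ ℕ with d ≥ 1 and k₀ > 0, and let f : ℝ^d → ℂ be a Schwartz function. For z > 0 define E(x, z) = ∫_{ℝ^d} (k₀ / (2 i π z))^{d/2} · exp( i k₀ |x − y|² / (2 z) ) · f(y) dy, where the complex power is taken with the principal branch. Then for every x ∈ ℝ^d, E(x, z) converges to f(x) as z → 0⁺. -/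
open MeasureTheory Complex Filter SchwartzMap
open scoped Real BigOperators Topology FourierTransform RealInnerProductSpace

/-!
With `b = 2π²iz/k₀` the Fresnel kernel is the Gaussian kernel `(π/b)^{d/2} exp(-π²|u|²/b)` at an
imaginary parameter. For `re b > 0` this kernel is the Fourier transform of `exp(-b|ξ|²)`, so by
self-adjointness of the Fourier transform its convolution with `f` is
`∫ exp(-b|ξ|² + 2πi⟨x, ξ⟩) 𝓕f(ξ) dξ`. Both sides are continuous in `b` on the closed right
half-plane minus the origin, hence agree there, and the right-hand side is continuous up to `b = 0`,
where it equals `f x` by Fourier inversion.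
-/

noncomputable section

lemma norm_cexp_neg_mul_sq_norm_add_le_one {V : Type*} [NormedAddCommGroup V]
    [InnerProductSpace ℝ V] {b : ℂ} (hb : 0 ≤ b.re) (X v : V) :
    ‖cexp (-b * ‖v‖ ^ 2 + 2 * π * I * ⟪X, v⟫)‖ ≤ 1 := by
  rw [norm_exp, Real.exp_le_one_iff]
  have hre : (-b * ‖v‖ ^ 2 + 2 * π * I * ⟪X, v⟫).re = -(b.re * ‖v‖ ^ 2) := by
    simp [← ofReal_pow, mul_comm]
  rw [hre]
  exact neg_nonpos.2 (by positivity)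

lemma norm_cexp_neg_sq_div_le_one {b : ℂ} (hb : 0 ≤ b.re) (s : ℝ) :
    ‖cexp (-π ^ 2 * s ^ 2 / b)‖ ≤ 1 := by
  rw [norm_exp, Real.exp_le_one_iff]
  have hre : (-π ^ 2 * s ^ 2 / b).re = -(π ^ 2 * s ^ 2 * (b.re / normSq b)) := by
    rw [show -π ^ 2 * s ^ 2 / b = ((-(π ^ 2 * s ^ 2) : ℝ) : ℂ) * b⁻¹ by push_cast; ring,
      re_ofReal_mul, inv_re]
    ring
  rw [hre]
  exact neg_nonpos.2 (mul_nonneg (by positivity) (div_nonneg hb (normSq_nonneg b)))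

lemma Complex.ofReal_div_mem_slitPlane_of_re_nonneg {r : ℝ} (hr : 0 < r) {b : ℂ} (hb : 0 ≤ b.re)
    (hb₀ : b ≠ 0) : (r : ℂ) / b ∈ slitPlane := by
  have hnormSq : 0 < normSq b := normSq_pos.2 hb₀
  rw [mem_slitPlane_iff, div_re, div_im]
  rcases hb.lt_or_eq with hpos | hzero
  · left
    simp only [ofReal_re, ofReal_im, zero_mul, zero_div, add_zero]
    positivity
  · right
    have him : b.im ≠ 0 := fun h ↦ hb₀ (ext hzero.symm h)
    simp only [ofReal_re, ofReal_im, zero_mul, zero_div, zero_sub]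
    exact neg_ne_zero.2 (div_ne_zero (mul_ne_zero hr.ne' him) hnormSq.ne')

variable {V : Type*} [NormedAddCommGroup V] [InnerProductSpace ℝ V] [FiniteDimensional ℝ V]
  [MeasurableSpace V] [BorelSpace V]

def gaussianKernel (b : ℂ) (u : V) : ℂ :=
  (π / b) ^ (Module.finrank ℝ V / 2 : ℂ) * cexp (-π ^ 2 * ‖u‖ ^ 2 / b)

/-- `𝓕⁻ (exp (-b ‖·‖²) • 𝓕 G) X`, written out as an integral. -/
def gaussianMultiplier (b : ℂ) (G : 𝓢(V, ℂ)) (X : V) : ℂ :=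
  ∫ v, cexp (-b * ‖v‖ ^ 2 + 2 * π * I * ⟪X, v⟫) * 𝓕 G v

lemma continuousOn_gaussianMultiplier (G : 𝓢(V, ℂ)) (X : V) :
    ContinuousOn (fun b ↦ gaussianMultiplier b G X) {b | 0 ≤ b.re} := by
  refine continuousOn_of_dominated (bound := fun v ↦ ‖𝓕 G v‖) (fun b _ ↦ ?_) (fun b hb ↦ ?_)
    (𝓕 G).integrable.norm (ae_of_all _ fun v ↦ ?_)
  · exact (Continuous.aestronglyMeasurable (by fun_prop)).mul
      (𝓕 G).continuous.aestronglyMeasurable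
  · refine ae_of_all _ fun v ↦ ?_
    rw [norm_mul]
    exact mul_le_of_le_one_left (norm_nonneg _) (norm_cexp_neg_mul_sq_norm_add_le_one hb X v)
  · exact Continuous.continuousOn (by fun_prop)

lemma gaussianMultiplier_zero (G : 𝓢(V, ℂ)) (X : V) : gaussianMultiplier 0 G X = G X := by
  conv_rhs => rw [← FourierTransform.fourierInv_fourier_eq (F := 𝓢(V, ℂ)) G, fourierInv_coe,
    Real.fourierInv_eq']
  simp only [gaussianMultiplier, neg_zero, zero_mul, zero_add, smul_eq_mul, real_inner_comm X]
  congr! 4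
  push_cast
  ring

lemma integral_gaussianKernel_mul_eq_of_re_pos {b : ℂ} (hb : 0 < b.re)
    (G : 𝓢(V, ℂ)) (X : V) :
    ∫ ξ, gaussianKernel b (X - ξ) * G ξ = gaussianMultiplier b G X := by
  have hg := GaussianFourier.integrable_cexp_neg_mul_sq_norm_add hb (2 * π * I) X
  calc ∫ ξ, gaussianKernel b (X - ξ) * G ξ
      = ∫ ξ, 𝓕 (fun v ↦ cexp (-b * ‖v‖ ^ 2 + 2 * π * I * ⟪X, v⟫)) ξ * G ξ := by
        simp only [fourier_gaussian_innerProductSpace' hb, gaussianKernel]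
    _ = gaussianMultiplier b G X := by
        have h := VectorFourier.integral_fourierIntegral_smul_eq_flip (L := innerₗ V)
          Real.continuous_fourierChar continuous_inner hg (G.integrable (μ := volume))
        simp only [smul_eq_mul, flip_innerₗ] at h
        exact h

lemma continuousOn_integral_gaussianKernel_mul (G : 𝓢(V, ℂ)) (X : V) :
    ContinuousOn (fun b ↦ ∫ ξ, gaussianKernel b (X - ξ) * G ξ) ({b | 0 ≤ b.re} \ {0}) := by
  simp_rw [gaussianKernel, mul_assoc, integral_const_mul]
  refine ContinuousOn.mul ?_ ?_
  · refine ContinuousOn.cpow_const (continuousOn_const.div continuousOn_id fun b hb ↦ hb.2) ?_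
    exact fun b hb ↦ ofReal_div_mem_slitPlane_of_re_nonneg Real.pi_pos hb.1 hb.2
  · refine continuousOn_of_dominated (bound := fun ξ ↦ ‖G ξ‖) (fun b hb ↦ ?_) (fun b hb ↦ ?_)
      G.integrable.norm (ae_of_all _ fun ξ ↦ ?_)
    · exact (Continuous.aestronglyMeasurable (by fun_prop)).mul
        G.continuous.aestronglyMeasurable
    · refine ae_of_all _ fun ξ ↦ ?_
      rw [norm_mul]
      exact mul_le_of_le_one_left (norm_nonneg _) (norm_cexp_neg_sq_div_le_one hb.1 _)
    · exact (continuousOn_const.div continuousOn_id fun b hb ↦ hb.2).cexp.mul continuousOn_const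

lemma integral_gaussianKernel_mul_eq {b : ℂ} (hb : 0 ≤ b.re) (hb₀ : b ≠ 0)
    (G : 𝓢(V, ℂ)) (X : V) :
    ∫ ξ, gaussianKernel b (X - ξ) * G ξ = gaussianMultiplier b G X := by
  have heq : Set.EqOn (fun b ↦ ∫ ξ, gaussianKernel b (X - ξ) * G ξ)
      (fun b ↦ gaussianMultiplier b G X) {b | 0 < b.re} :=
    fun b hb ↦ integral_gaussianKernel_mul_eq_of_re_pos hb G X
  have hclosure : {b : ℂ | 0 ≤ b.re} \ {0} ⊆ closure {b | 0 < b.re} := by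
    rw [closure_setOfPred_lt_re]
    exact Set.sdiff_subset
  exact heq.of_subset_closure (continuousOn_integral_gaussianKernel_mul G X)
    ((continuousOn_gaussianMultiplier G X).mono Set.sdiff_subset)
    (fun b (hb : 0 < b.re) ↦ ⟨hb.le, fun h ↦ by simp_all⟩) hclosure ⟨hb, hb₀⟩

theorem tendsto_integral_gaussianKernel_mul (G : 𝓢(V, ℂ)) (X : V) :
    Tendsto (fun b ↦ ∫ ξ, gaussianKernel b (X - ξ) * G ξ) (𝓝[{b | 0 ≤ b.re} \ {0}] 0)
      (𝓝 (G X)) := by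
  have hlim : Tendsto (fun b ↦ gaussianMultiplier b G X) (𝓝[{b | 0 ≤ b.re} \ {0}] 0)
      (𝓝 (G X)) := by
    rw [← gaussianMultiplier_zero G X]
    exact ((continuousOn_gaussianMultiplier G X 0 (by simp)).mono Set.sdiff_subset).tendsto
  refine hlim.congr' ?_
  filter_upwards [self_mem_nhdsWithin] with b hb
  exact (integral_gaussianKernel_mul_eq hb.1 hb.2 G X).symm

lemma fresnelKernel_eq_gaussianKernel {d : ℕ} {k₀ z : ℝ} (hk : k₀ ≠ 0) (hz : z ≠ 0)
    (u : EuclideanSpace ℝ (Fin d)) :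
    ((k₀ : ℂ) / (2 * I * π * z)) ^ ((d : ℂ) / 2) * cexp (I * k₀ * ((‖u‖ ^ 2 : ℝ) : ℂ) / (2 * z)) =
      gaussianKernel (2 * π ^ 2 * I * z / k₀) u := by
  have hπ : (π : ℂ) ≠ 0 := ofReal_ne_zero.2 Real.pi_ne_zero
  have hk' : (k₀ : ℂ) ≠ 0 := ofReal_ne_zero.2 hk
  have hz' : (z : ℂ) ≠ 0 := ofReal_ne_zero.2 hz
  rw [gaussianKernel, finrank_euclideanSpace_fin]
  congr 2
  · field_simp
  · push_cast
    field_simp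
    ring_nf
    rw [I_sq]
    ring

lemma integral_fresnel_eq_integral_gaussianKernel_mul {d : ℕ} {k₀ z : ℝ} (hk : k₀ ≠ 0) (hz : z ≠ 0)
    (f : 𝓢(Fin d → ℝ, ℂ)) (x : Fin d → ℝ) :
    ∫ y : Fin d → ℝ, ((k₀ : ℂ) / (2 * I * π * z)) ^ ((d : ℂ) / 2) *
        cexp (I * k₀ * ((∑ i, (x i - y i) ^ 2 : ℝ) : ℂ) / (2 * z)) * f y =
      ∫ ξ, gaussianKernel (2 * π ^ 2 * I * z / k₀) (WithLp.toLp 2 x - ξ) *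
        compCLMOfContinuousLinearEquiv ℝ (EuclideanSpace.equiv (Fin d) ℝ) f ξ := by
  rw [← (EuclideanSpace.volume_preserving_symm_measurableEquiv_toLp (Fin d)).integral_comp']
  congr 1 with ξ
  rw [← fresnelKernel_eq_gaussianKernel hk hz, EuclideanSpace.norm_sq_eq]
  congr 4
  simp [sq_abs]

end

theorem paraxial_propagated_field_initial_condition_general
    (d : ℕ) (k₀ : ℝ) (hk : 0 < k₀)
    (f : SchwartzMap ((Fin d) → ℝ) ℂ)
    (E : ((Fin d) → ℝ) → ℝ → ℂ)
    (hE : ∀ (x : Fin d → ℝ) (z : ℝ), E x z =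
      ∫ y : Fin d → ℝ,
        ((k₀ : ℂ) / (2 * Complex.I * (π : ℂ) * (z : ℂ))) ^ ((d : ℂ) / 2) *
          Complex.exp (Complex.I * (k₀ : ℂ) * ((∑ i, (x i - y i) ^ 2 : ℝ) : ℂ) /
            (2 * (z : ℂ))) * f y) :
    ∀ x : Fin d → ℝ,
      Tendsto (fun z : ℝ => E x z) (𝓝[>] (0 : ℝ)) (𝓝 (f x)) := by
  intro x
  have hb : Tendsto (fun z : ℝ ↦ 2 * π ^ 2 * I * z / k₀) (𝓝[>] 0)
      (𝓝[{b | 0 ≤ b.re} \ {0}] 0) := by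
    refine tendsto_nhdsWithin_iff.2 ⟨?_, ?_⟩
    · exact (Continuous.tendsto' (by fun_prop) 0 0 (by simp)).mono_left nhdsWithin_le_nhds
    · filter_upwards [self_mem_nhdsWithin] with z (hz : 0 < z)
      simp [hz.ne', hk.ne', Real.pi_ne_zero, ← ofReal_pow]
  let G := compCLMOfContinuousLinearEquiv ℝ (EuclideanSpace.equiv (Fin d) ℝ) f
  have hG : G (WithLp.toLp 2 x) = f x := rfl
  rw [← hG]
  refine ((tendsto_integral_gaussianKernel_mul G (WithLp.toLp 2 x)).comp hb).congr' ?_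
  filter_upwards [self_mem_nhdsWithin] with z (hz : 0 < z)
  exact ((hE x z).trans (integral_fresnel_eq_integral_gaussianKernel_mul hk.ne' hz.ne' f x)).symm

/-- The Fresnel-type oscillatory kernel acts as an approximate identity as `z → 0⁺`:
for a Schwartz initial field `f`, the propagated field
`E(x,z) = ∫ (k₀/(2iπz))^{d/2} exp(i k₀ |x−y|²/(2z)) f(y) dy`
converges to `f(x)` as `z → 0⁺`. -/
theorem paraxial_propagated_field_initial_condition
    (d : ℕ) (hd : 1 ≤ d) (k₀ : ℝ) (hk : 0 < k₀)
    (f : SchwartzMap ((Fin d) → ℝ) ℂ)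
    (E : ((Fin d) → ℝ) → ℝ → ℂ)
    (hE : ∀ (x : Fin d → ℝ) (z : ℝ), E x z =
      ∫ y : Fin d → ℝ,
        ((k₀ : ℂ) / (2 * Complex.I * (π : ℂ) * (z : ℂ))) ^ ((d : ℂ) / 2) *
          Complex.exp (Complex.I * (k₀ : ℂ) * ((∑ i, (x i - y i) ^ 2 : ℝ) : ℂ) /
            (2 * (z : ℂ))) * f y) :
    ∀ x : Fin d → ℝ,
      Tendsto (fun z : ℝ => E x z) (𝓝[>] (0 : ℝ)) (𝓝 (f x)) :=
  paraxial_propagated_field_initial_condition_general d k₀ hk f E hE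
end

section
/- Fix d ∈ ℕ with d ≥ 1, k₀ > 0, and γ̄₂ > 0. For ξ, ζ ∈ ℝ^d and z > 0 define ψ(ξ, ζ, z) = (2 π k₀² γ̄₂ z)^{−d/2} · exp( − (γ̄₂ z³ / 24) |ζ|² − i (z / (2 k₀)) ξ·ζ − |ξ|² / (2 k₀² γ̄₂ z) ). Then for every ξ, ζ ∈ ℝ^d and z > 0, ψ satisfies the complex advection–diffusion equation ∂ψ/∂z (ξ, ζ, z) + (i / k₀) (ξ·ζ) ψ(ξ, ζ, z) = (k₀² γ̄₂ / 2) Δ_ξ ψ(ξ, ζ, z), where Δ_ξ denotes the Laplacian with respect to ξ. -/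
/-!
Write `ψ = A(z) · exp E(ξ, ζ, z)` with `A(z) = (2πk₀²γ̄₂z)^{-d/2}`. For fixed `ζ` and `z`, `ψ` is
a Gaussian `C exp(K + Σⱼ βⱼ ξⱼ + δ |ξ|²)` in `ξ`, with `βⱼ = -i z ζⱼ / (2k₀)` and
`δ = -1 / (2k₀²γ̄₂z)`, so `∂²ψ/∂ξᵢ² = ψ · ((βᵢ + 2δξᵢ)² + 2δ)`; and `∂ψ/∂z = ψ · (A'/A + ∂E/∂z)`.
Both sides of the equation are therefore `ψ` times a polynomial in `|ζ|²`, `ξ·ζ`, `|ξ|²` and `d`,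
and the two polynomials agree because `i² = -1`.
-/

open Complex
open scoped Real

theorem Finset.sum_apply_update_eq_sub_add {ι α M : Type*} [Fintype ι] [DecidableEq ι]
    [AddCommGroup M] (g : ι → α → M) (ξ : ι → α) (i : ι) (t : α) :
    ∑ j, g j (Function.update ξ i t j) = ∑ j, g j (ξ j) - g i (ξ i) + g i t := by
  rw [Finset.sum_congr rfl fun j _ => Function.apply_update g ξ i t j,
    Finset.sum_update_of_mem (Finset.mem_univ i), Finset.sdiff_singleton_eq_erase,
    Finset.sum_erase_eq_sub (Finset.mem_univ i), add_comm]

theorem Finset.sum_sq_mul_add_mul_add {ι R : Type*} [Fintype ι] [CommRing R] (a b c : R)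
    (x y : ι → R) :
    ∑ i, ((a * x i + b * y i) ^ 2 + c) =
      a ^ 2 * ∑ i, x i ^ 2 + 2 * a * b * ∑ i, x i * y i + b ^ 2 * ∑ i, y i ^ 2
        + Fintype.card ι * c := by
  rw [← nsmul_eq_mul, ← Finset.card_univ, ← Finset.sum_const, Finset.mul_sum, Finset.mul_sum,
    Finset.mul_sum, ← Finset.sum_add_distrib, ← Finset.sum_add_distrib, ← Finset.sum_add_distrib]
  exact Finset.sum_congr rfl fun i _ => by ring

theorem hasDerivAt_mul_cexp_quadratic (C K β δ : ℂ) (x : ℝ) :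
    HasDerivAt (fun t : ℝ => C * cexp (K + β * t + δ * (t : ℂ) ^ 2))
      (C * cexp (K + β * x + δ * (x : ℂ) ^ 2) * (β + 2 * δ * x)) x := by
  have h := ((((hasDerivAt_id' x).ofReal_comp.const_mul β).const_add K).fun_add
    (((hasDerivAt_id' x).ofReal_comp.fun_pow 2).const_mul δ)).cexp.const_mul C
  refine h.congr_deriv ?_
  push_cast
  ring

theorem iteratedDeriv_two_mul_cexp_quadratic (C K β δ : ℂ) (x : ℝ) :
    iteratedDeriv 2 (fun t : ℝ => C * cexp (K + β * t + δ * (t : ℂ) ^ 2)) x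
      = C * cexp (K + β * x + δ * (x : ℂ) ^ 2) * ((β + 2 * δ * x) ^ 2 + 2 * δ) := by
  have h := (hasDerivAt_mul_cexp_quadratic C K β δ x).fun_mul
    (((hasDerivAt_id' x).ofReal_comp.const_mul (2 * δ)).const_add β)
  rw [iteratedDeriv_succ, iteratedDeriv_one,
    funext fun t => (hasDerivAt_mul_cexp_quadratic C K β δ t).deriv, h.deriv]
  push_cast
  ring

theorem sum_iteratedDeriv_two_update_mul_cexp_quadratic {ι : Type*} [Fintype ι] [DecidableEq ι]
    (C K δ : ℂ) (β : ι → ℂ) (ξ : ι → ℝ) :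
    ∑ i, iteratedDeriv 2 (fun t : ℝ => C * cexp (K +
        ∑ j, (β j * Function.update ξ i t j + δ * (Function.update ξ i t j : ℂ) ^ 2))) (ξ i)
      = C * cexp (K + ∑ j, (β j * ξ j + δ * (ξ j : ℂ) ^ 2)) *
          ∑ i, ((β i + 2 * δ * ξ i) ^ 2 + 2 * δ) := by
  rw [Finset.mul_sum]
  refine Finset.sum_congr rfl fun i _ => ?_
  set S := ∑ j, (β j * ξ j + δ * (ξ j : ℂ) ^ 2)
  have slice (t : ℝ) :
      K + ∑ j, (β j * Function.update ξ i t j + δ * (Function.update ξ i t j : ℂ) ^ 2)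
        = K + S - (β i * ξ i + δ * (ξ i : ℂ) ^ 2) + β i * t + δ * (t : ℂ) ^ 2 := by
    rw [Finset.sum_apply_update_eq_sub_add (fun j (x : ℝ) => β j * (x : ℂ) + δ * (x : ℂ) ^ 2)]
    ring
  simp_rw [slice, iteratedDeriv_two_mul_cexp_quadratic]
  congr 3
  ring

noncomputable def spotDancingKernel (d : ℕ) (k₀ γ₂ : ℝ) (ξ ζ : Fin d → ℝ) (z : ℝ) : ℂ :=
  (((2 * π * k₀ ^ 2 * γ₂ * z) ^ (-(d : ℝ) / 2) : ℝ) : ℂ) *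
    cexp (-(((γ₂ * z ^ 3 / 24) * (∑ i, (ζ i) ^ 2) : ℝ) : ℂ)
      - I * ((z / (2 * k₀) : ℝ) : ℂ) * ((∑ i, ξ i * ζ i : ℝ) : ℂ)
      - (((∑ i, (ξ i) ^ 2) / (2 * k₀ ^ 2 * γ₂ * z) : ℝ) : ℂ))

section spotDancingKernel

variable {d : ℕ} {k₀ γ₂ : ℝ}

theorem hasDerivAt_spotDancingKernel (hk : k₀ ≠ 0) (hγ : γ₂ ≠ 0) (ξ ζ : Fin d → ℝ) {z : ℝ}
    (hz : z ≠ 0) :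
    HasDerivAt (spotDancingKernel d k₀ γ₂ ξ ζ) (spotDancingKernel d k₀ γ₂ ξ ζ z *
      (-(d / (2 * z)) - γ₂ * z ^ 2 / 8 * ∑ i, (ζ i : ℂ) ^ 2 - I / (2 * k₀) * ∑ i, (ξ i : ℂ) * ζ i
        + (∑ i, (ξ i : ℂ) ^ 2) / (2 * k₀ ^ 2 * γ₂ * z ^ 2))) z := by
  have hc : 2 * π * k₀ ^ 2 * γ₂ * z ≠ 0 := by positivity
  have hA := ((hasDerivAt_id' z).const_mul (2 * π * k₀ ^ 2 * γ₂)).rpow_const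
    (p := -(d : ℝ) / 2) (Or.inl hc)
  have hE := ((((hasDerivAt_pow 3 z).const_mul γ₂).div_const 24).mul_const (∑ i, ζ i ^ 2)
    |>.ofReal_comp.fun_neg.fun_sub
      ((((hasDerivAt_id' z).div_const (2 * k₀)).ofReal_comp.const_mul I).mul_const
        ((∑ i, ξ i * ζ i : ℝ) : ℂ))).fun_sub
    ((hasDerivAt_const z (∑ i, ξ i ^ 2)).fun_div
      ((hasDerivAt_id' z).const_mul (2 * k₀ ^ 2 * γ₂)) (by simpa using hc)).ofReal_comp
  refine (hA.ofReal_comp.fun_mul hE.cexp).congr_deriv ?_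
  rw [Real.rpow_sub_one hc]
  unfold spotDancingKernel
  generalize cexp _ = w
  have := ofReal_ne_zero.mpr hk
  have := ofReal_ne_zero.mpr hγ
  have := ofReal_ne_zero.mpr hz
  push_cast
  field_simp
  ring

theorem spotDancingKernel_eq_mul_cexp_quadratic (ξ ζ : Fin d → ℝ) (z : ℝ) :
    spotDancingKernel d k₀ γ₂ ξ ζ z =
      (((2 * π * k₀ ^ 2 * γ₂ * z) ^ (-(d : ℝ) / 2) : ℝ) : ℂ) *
        cexp (-(((γ₂ * z ^ 3 / 24) * (∑ i, (ζ i) ^ 2) : ℝ) : ℂ) +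
          ∑ j, (-I * z / (2 * k₀) * ζ j * ξ j + -1 / (2 * k₀ ^ 2 * γ₂ * z) * (ξ j : ℂ) ^ 2)) := by
  have linear_part : ∑ j, -I * z / (2 * k₀) * ζ j * ξ j
      = -I * z / (2 * k₀) * ∑ j, (ξ j : ℂ) * ζ j := by
    rw [Finset.mul_sum]
    exact Finset.sum_congr rfl fun j _ => by ring
  rw [spotDancingKernel, Finset.sum_add_distrib, linear_part, ← Finset.mul_sum]
  push_cast
  ring_nf

theorem sum_iteratedDeriv_two_spotDancingKernel (hk : k₀ ≠ 0) (ξ ζ : Fin d → ℝ) {z : ℝ}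
    (hz : z ≠ 0) :
    ∑ i, iteratedDeriv 2 (fun t => spotDancingKernel d k₀ γ₂ (Function.update ξ i t) ζ z) (ξ i)
      = spotDancingKernel d k₀ γ₂ ξ ζ z *
        (-(z ^ 2 / (4 * k₀ ^ 2)) * ∑ i, (ζ i : ℂ) ^ 2 + I / (k₀ ^ 3 * γ₂) * ∑ i, (ξ i : ℂ) * ζ i
          + (∑ i, (ξ i : ℂ) ^ 2) / (k₀ ^ 4 * γ₂ ^ 2 * z ^ 2) - d / (k₀ ^ 2 * γ₂ * z)) := by
  simp_rw [spotDancingKernel_eq_mul_cexp_quadratic _ ζ z]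
  rw [sum_iteratedDeriv_two_update_mul_cexp_quadratic, Finset.sum_sq_mul_add_mul_add,
    Fintype.card_fin]
  simp_rw [mul_comm (ζ _ : ℂ) (ξ _ : ℂ)]
  congr 1
  have := ofReal_ne_zero.mpr hk
  have := ofReal_ne_zero.mpr hz
  linear_combination (norm := skip) (z ^ 2 / (4 * k₀ ^ 2) * ∑ i, (ζ i : ℂ) ^ 2) * I_sq
  field_simp
  ring

end spotDancingKernel

theorem spot_dancing_kernel_solves_equation_general
    (d : ℕ) (k₀ : ℝ) (hk : 0 < k₀) (γ₂ : ℝ) (hγ : 0 < γ₂)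
    (ψ : (Fin d → ℝ) → (Fin d → ℝ) → ℝ → ℂ)
    (hψ : ∀ (ξ ζ : Fin d → ℝ) (z : ℝ), ψ ξ ζ z =
      (((2 * π * k₀ ^ 2 * γ₂ * z) ^ (-(d : ℝ) / 2) : ℝ) : ℂ) *
        Complex.exp (
          -(((γ₂ * z ^ 3 / 24) * (∑ i, (ζ i) ^ 2) : ℝ) : ℂ)
          - Complex.I * ((z / (2 * k₀) : ℝ) : ℂ) * ((∑ i, ξ i * ζ i : ℝ) : ℂ)
          - (((∑ i, (ξ i) ^ 2) / (2 * k₀ ^ 2 * γ₂ * z) : ℝ) : ℂ))) :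
    ∀ (ξ ζ : Fin d → ℝ) (z : ℝ), 0 < z →
      deriv (fun s : ℝ => ψ ξ ζ s) z
        + (Complex.I / (k₀ : ℂ)) * ((∑ i, ξ i * ζ i : ℝ) : ℂ) * ψ ξ ζ z
        = ((k₀ ^ 2 * γ₂ / 2 : ℝ) : ℂ) *
            (∑ i, iteratedDeriv 2 (fun t : ℝ => ψ (Function.update ξ i t) ζ z) (ξ i)) := by
  intro ξ ζ z hz
  obtain rfl : ψ = spotDancingKernel d k₀ γ₂ := funext₃ hψ
  rw [(hasDerivAt_spotDancingKernel hk.ne' hγ.ne' ξ ζ hz.ne').deriv,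
    sum_iteratedDeriv_two_spotDancingKernel hk.ne' ξ ζ hz.ne']
  have := ofReal_ne_zero.mpr hk.ne'
  have := ofReal_ne_zero.mpr hγ.ne'
  have := ofReal_ne_zero.mpr hz.ne'
  push_cast
  field_simp
  ring

/-- The explicit kernel
`ψ(ξ,ζ,z) = (2πk₀²γ̄₂z)^{−d/2} exp(−(γ̄₂z³/24)|ζ|² − i(z/(2k₀))ξ·ζ − |ξ|²/(2k₀²γ̄₂z))`
satisfies the complex advection–diffusion equation
`∂ψ/∂z + (i/k₀)(ξ·ζ)ψ = (k₀²γ̄₂/2) Δ_ξ ψ` for `z > 0`. -/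
theorem spot_dancing_kernel_solves_equation
    (d : ℕ) (hd : 1 ≤ d) (k₀ : ℝ) (hk : 0 < k₀) (γ₂ : ℝ) (hγ : 0 < γ₂)
    (ψ : (Fin d → ℝ) → (Fin d → ℝ) → ℝ → ℂ)
    (hψ : ∀ (ξ ζ : Fin d → ℝ) (z : ℝ), ψ ξ ζ z =
      (((2 * π * k₀ ^ 2 * γ₂ * z) ^ (-(d : ℝ) / 2) : ℝ) : ℂ) *
        Complex.exp (
          -(((γ₂ * z ^ 3 / 24) * (∑ i, (ζ i) ^ 2) : ℝ) : ℂ)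
          - Complex.I * ((z / (2 * k₀) : ℝ) : ℂ) * ((∑ i, ξ i * ζ i : ℝ) : ℂ)
          - (((∑ i, (ξ i) ^ 2) / (2 * k₀ ^ 2 * γ₂ * z) : ℝ) : ℂ))) :
    ∀ (ξ ζ : Fin d → ℝ) (z : ℝ), 0 < z →
      deriv (fun s : ℝ => ψ ξ ζ s) z
        + (Complex.I / (k₀ : ℂ)) * ((∑ i, ξ i * ζ i : ℝ) : ℂ) * ψ ξ ζ z
        = ((k₀ ^ 2 * γ₂ / 2 : ℝ) : ℂ) *
            (∑ i, iteratedDeriv 2 (fun t : ℝ => ψ (Function.update ξ i t) ζ z) (ξ i)) :=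
  spot_dancing_kernel_solves_equation_general d k₀ hk γ₂ hγ ψ hψ
end
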